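/- arXiv:1402.3583 — 7 statements merged into one kernel-verified Lean document; each statement's English description precedes it below -/
import Mathlib

section
/- Let (V, V⁺, e) be an AOU space, f ∈ V⁺ ∩ (e - V⁺) an effect, and φ : V → V a positive linear map. Then the following are equivalent: (i) φ(e) = f and φ(g) = g for all g with 0 ≤ g ≤ f; (ii) φ(e) ≤ f and φ(g) ≥ g for all g with 0 ≤ g ≤ f. -/
/-- An Archimedean order unit (AOU) space structure on a real vector space `V`:
a cone `pos`, an order unit `e`, and the Archimedean property. -/
structure AOU (V : Type*) [AddCommGroup V] [Module ℝ V] where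
  pos : Set V
  e : V
  add_mem : ∀ {x y : V}, x ∈ pos → y ∈ pos → x + y ∈ pos
  smul_mem : ∀ {r : ℝ}, 0 ≤ r → ∀ {x : V}, x ∈ pos → r • x ∈ pos
  pointed : ∀ {x : V}, x ∈ pos → -x ∈ pos → x = 0
  e_mem : e ∈ pos
  order_unit : ∀ x : V, ∃ r : ℝ, 0 ≤ r ∧ r • e + x ∈ pos
  arch : ∀ x : V, (∀ r : ℝ, 0 < r → x + r • e ∈ pos) → x ∈ pos

namespace AOU

variable {V : Type*} [AddCommGroup V] [Module ℝ V] (A : AOU V)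

/-- The partial order induced by the cone: `x ≤ y` iff `y - x ∈ pos`. -/
def Le (x y : V) : Prop := y - x ∈ A.pos

/-- The order norm `‖x‖ = inf {r ≥ 0 : -r e ≤ x ≤ r e}`. -/
noncomputable def onorm (x : V) : ℝ :=
  sInf {r : ℝ | 0 ≤ r ∧ A.Le (-(r • A.e)) x ∧ A.Le x (r • A.e)}

/-- A state is a linear functional with `ω e = 1` that is nonnegative on the cone. -/
def IsState (ω : V →ₗ[ℝ] ℝ) : Prop := ω A.e = 1 ∧ ∀ x ∈ A.pos, 0 ≤ ω x

/-- An effect is an element `f` with `0 ≤ f ≤ e`. -/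
def IsEffect (f : V) : Prop := f ∈ A.pos ∧ A.Le f A.e

/-- A positive map sends the cone into itself. -/
def IsPosMap (φ : V →ₗ[ℝ] V) : Prop := ∀ x ∈ A.pos, φ x ∈ A.pos

/-- A coherent `f`-compatible map (coherent Lüders rule): positive, `φ e = f`,
and `φ g = g` whenever `0 ≤ g ≤ f`. -/
def IsCLR (f : V) (φ : V →ₗ[ℝ] V) : Prop :=
  A.IsPosMap φ ∧ φ A.e = f ∧ ∀ g ∈ A.pos, A.Le g f → φ g = g

end AOU

lemma AOU.zero_mem {V : Type*} [AddCommGroup V] [Module ℝ V] (A : AOU V) :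
    (0 : V) ∈ A.pos := by
  have := A.smul_mem (le_refl (0 : ℝ)) A.e_mem
  simpa using this

lemma AOU.le_refl' {V : Type*} [AddCommGroup V] [Module ℝ V] (A : AOU V) (x : V) :
    A.Le x x := by
  simpa [AOU.Le] using A.zero_mem

lemma AOU.le_antisymm' {V : Type*} [AddCommGroup V] [Module ℝ V] (A : AOU V) {x y : V}
    (h1 : A.Le x y) (h2 : A.Le y x) : x = y := by
  have := A.pointed h1 (by simpa [AOU.Le, neg_sub] using h2)
  have : y = x := by linear_combination (norm := abel_nf) this
  exact this.symm

theorem aou_coherent_tfae {V : Type*} [AddCommGroup V] [Module ℝ V]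
    (A : AOU V) (f : V) (hf : A.IsEffect f) (φ : V →ₗ[ℝ] V) (hφ : A.IsPosMap φ) :
    (φ A.e = f ∧ ∀ g ∈ A.pos, A.Le g f → φ g = g) ↔
      (A.Le (φ A.e) f ∧ ∀ g ∈ A.pos, A.Le g f → A.Le g (φ g)) := by
  constructor
  · rintro ⟨he, hfix⟩
    refine ⟨he ▸ A.le_refl' f, fun g hg hgf => by rw [hfix g hg hgf]; exact A.le_refl' g⟩
  · rintro ⟨hef, hge⟩
    -- φ f ≤ φ e ≤ f
    have hφf_le_f : A.Le (φ f) f := by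
      have h1 : φ (A.e - f) ∈ A.pos := hφ _ hf.2
      have h2 : A.Le (φ f) (φ A.e) := by
        simpa [AOU.Le, map_sub] using h1
      -- transitivity
      have : (f - φ A.e) + (φ A.e - φ f) ∈ A.pos := A.add_mem hef h2
      simpa [AOU.Le, sub_add_sub_cancel] using this
    have key : ∀ g ∈ A.pos, A.Le g f → φ g = g := by
      intro g hg hgf
      have hfg_pos : f - g ∈ A.pos := hgf
      have hfg_le : A.Le (f - g) f := by
        simpa [AOU.Le, sub_sub_cancel] using hg
      have h1 : A.Le g (φ g) := hge g hg hgf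
      have h2 : A.Le (f - g) (φ (f - g)) := hge _ hfg_pos hfg_le
      -- φ g ≤ φ f - f + g ≤ g
      have h3 : (φ f - φ g) - (f - g) ∈ A.pos := by
        simpa [AOU.Le, map_sub] using h2
      have h4 : g - φ g ∈ A.pos := by
        have := A.add_mem h3 hφf_le_f
        have heq : ((φ f - φ g) - (f - g)) + (f - φ f) = g - φ g := by abel
        rwa [heq] at this
      exact A.le_antisymm' h4 h1
    have hφf : φ f = f := key f hf.1 (A.le_refl' f)
    have hφe : φ A.e = f := by
      have hfe : A.Le f (φ A.e) := by
        have h1 : φ (A.e - f) ∈ A.pos := hφ _ hf.2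
        have : A.Le (φ f) (φ A.e) := by simpa [AOU.Le, map_sub] using h1
        rwa [hφf] at this
      exact A.le_antisymm' hef hfe
    exact ⟨hφe, key⟩
end

section
/- Let φ be a coherent f-compatible map for an effect f in an AOU space. Then for every h with f ≤ h ≤ e, one has φ(h) = f. -/
theorem aou_clr_above {V : Type*} [AddCommGroup V] [Module ℝ V]
    (A : AOU V) (f : V) (hf : A.IsEffect f) (φ : V →ₗ[ℝ] V) (hφ : A.IsCLR f φ)
    (h : V) (hfh : A.Le f h) (hhe : A.Le h A.e) :
    φ h = f := by
  obtain ⟨hpos, he, hfix⟩ := hφ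
  have h0 : (0:V) ∈ A.pos := by
    have := A.smul_mem (le_refl 0) A.e_mem
    simpa using this
  have hff : φ f = f := hfix f hf.1 (by simpa [AOU.Le] using h0)
  have h1 : f - φ h ∈ A.pos := by
    have := hpos (A.e - h) hhe
    simpa [map_sub, he] using this
  have h2 : φ h - f ∈ A.pos := by
    have := hpos (h - f) hfh
    simpa [map_sub, hff] using this
  have := A.pointed h1 (by simpa using h2)
  exact (sub_eq_zero.mp this).symm
end

section
/- Let f, g be effects in an AOU space with g ≤ f, let f♯ be a coherent f-compatible map, and suppose g♯ is the unique coherent g-compatible map. Then f♯ ∘ g♯ = g♯ ∘ f♯ = g♯. -/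
theorem aou_clr_commute {V : Type*} [AddCommGroup V] [Module ℝ V]
    (A : AOU V) (f g : V) (hf : A.IsEffect f) (hg : A.IsEffect g) (hgf : A.Le g f)
    (fs gs : V →ₗ[ℝ] V) (hfs : A.IsCLR f fs) (hgs : A.IsCLR g gs)
    (huniq : ∀ ψ : V →ₗ[ℝ] V, A.IsCLR g ψ → ψ = gs) :
    (∀ x, fs (gs x) = gs x) ∧ (∀ x, gs (fs x) = gs x) := by
  obtain ⟨hfpos, hfe, hffix⟩ := hfs
  obtain ⟨hgpos, hge, hgfix⟩ := hgs
  -- g ≤ f ≤ e, so x ≤ g implies x ≤ f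
  have hle : ∀ x : V, A.Le x g → A.Le x f := by
    intro x hx
    have : (f - g) + (g - x) ∈ A.pos := A.add_mem hgf hx
    simpa [AOU.Le, sub_add_sub_cancel] using this
  -- gs f = g : since g ≤ f ≤ e, gs g = g ≤ gs f ≤ gs e = g
  have hzero : (0:V) ∈ A.pos := by
    have := A.smul_mem (le_refl (0:ℝ)) A.e_mem
    simpa using this
  have hgsf : gs f = g := by
    have hgg : gs g = g := hgfix g hg.1 (by simpa [AOU.Le] using hzero)
    have h1 : gs f - g ∈ A.pos := by
      have := hgpos (f - g) hgf
      simpa [map_sub, hgg] using this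
    have h2 : -(gs f - g) ∈ A.pos := by
      have := hgpos (A.e - f) hf.2
      have : gs A.e - gs f ∈ A.pos := by simpa [map_sub] using this
      simpa [hge, neg_sub] using this
    exact sub_eq_zero.mp (A.pointed h1 h2)
  -- fs ∘ gs is a coherent g-compatible map
  have h1 : A.IsCLR g (fs ∘ₗ gs) := by
    refine ⟨fun x hx => hfpos _ (hgpos _ hx), ?_, ?_⟩
    · have : fs g = g := hffix g hg.1 hgf
      simp [LinearMap.comp_apply, hge, this]
    · intro x hx hxg
      have hgx : gs x = x := hgfix x hx hxg
      have hfx : fs x = x := hffix x hx (hle x hxg)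
      simp [LinearMap.comp_apply, hgx, hfx]
  -- gs ∘ fs is a coherent g-compatible map
  have h2 : A.IsCLR g (gs ∘ₗ fs) := by
    refine ⟨fun x hx => hgpos _ (hfpos _ hx), ?_, ?_⟩
    · simp [LinearMap.comp_apply, hfe, hgsf]
    · intro x hx hxg
      have hfx : fs x = x := hffix x hx (hle x hxg)
      have hgx : gs x = x := hgfix x hx hxg
      simp [LinearMap.comp_apply, hfx, hgx]
  have e1 := huniq _ h1
  have e2 := huniq _ h2
  constructor
  · intro x
    have := LinearMap.congr_fun e1 x; simpa using this
  · intro x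
    have := LinearMap.congr_fun e2 x; simpa using this
end

section
/- Let f be an effect in an AOU space admitting a coherent f-compatible map. Then g ≤ ‖g‖·f for all g with 0 ≤ g ≤ f. -/
theorem aou_clr_necessary {V : Type*} [AddCommGroup V] [Module ℝ V]
    (A : AOU V) (f : V) (hf : A.IsEffect f) (hex : ∃ φ : V →ₗ[ℝ] V, A.IsCLR f φ) :
    ∀ g ∈ A.pos, A.Le g f → A.Le g (A.onorm g • f) := by
  obtain ⟨φ, hpos, hφe, hfix⟩ := hex
  intro g hg hgf
  set S := {r : ℝ | 0 ≤ r ∧ A.Le (-(r • A.e)) g ∧ A.Le g (r • A.e)} with hSdef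
  obtain ⟨r, hr0, hre⟩ := A.order_unit (-g)
  have hne : S.Nonempty := by
    refine ⟨r, hr0, ?_, ?_⟩
    · simpa [AOU.Le, sub_neg_eq_add] using A.add_mem hg (A.smul_mem hr0 A.e_mem)
    · simpa [AOU.Le, sub_eq_add_neg] using hre
  have hbdd : BddBelow S := ⟨0, fun x hx => hx.1⟩
  have hkey : A.onorm g • A.e - g ∈ A.pos := by
    apply A.arch
    intro ε hε
    obtain ⟨s, hsS, hs⟩ := exists_lt_of_csInf_lt hne
      (show sInf S < sInf S + ε by linarith)
    have h1 : s • A.e - g ∈ A.pos := hsS.2.2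
    have h2 : (sInf S + ε - s) • A.e ∈ A.pos := A.smul_mem (by linarith) A.e_mem
    have h3 := A.add_mem h1 h2
    have heq : A.onorm g • A.e - g + ε • A.e
        = s • A.e - g + (sInf S + ε - s) • A.e := by
      show sInf S • A.e - g + ε • A.e = _
      module
    rw [heq]
    exact h3
  have h4 := hpos _ hkey
  rw [map_sub, map_smul, hφe, hfix g hg hgf] at h4
  exact h4
end

section
/- Let f be an effect in an AOU space such that g ≤ ‖g‖·f for all 0 ≤ g ≤ f. Then the only g satisfying 0 ≤ g ≤ f and g ≤ e - f is g = 0. -/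
theorem aou_clr_disjoint {V : Type*} [AddCommGroup V] [Module ℝ V]
    (A : AOU V) (f : V) (hf : A.IsEffect f)
    (hcond : ∀ g ∈ A.pos, A.Le g f → A.Le g (A.onorm g • f)) :
    ∀ g ∈ A.pos, A.Le g f → A.Le g (A.e - f) → g = 0 := by
  intro g hg hgf hgef
  set S := {r : ℝ | 0 ≤ r ∧ A.Le (-(r • A.e)) g ∧ A.Le g (r • A.e)} with hS
  set N := A.onorm g with hNdef
  have hSne : S.Nonempty := by
    obtain ⟨r, hr0, hr⟩ := A.order_unit (-g)
    refine ⟨r, hr0, ?_, ?_⟩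
    · show g - -(r • A.e) ∈ A.pos
      have := A.add_mem hg (A.smul_mem hr0 A.e_mem)
      simpa [sub_neg_eq_add, add_comm] using this
    · show r • A.e - g ∈ A.pos
      simpa [sub_eq_add_neg, add_comm] using hr
  have hbdd : BddBelow S := ⟨0, fun r hr => hr.1⟩
  have hN0 : 0 ≤ N := le_csInf hSne fun r hr => hr.1
  have hpos1 : (0 : ℝ) < 1 + N := by linarith
  -- key positivity: N•e - (1+N)•g ∈ pos
  have h1 : N • f - g ∈ A.pos := hcond g hg hgf
  have h2 : N • (A.e - f - g) ∈ A.pos := by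
    have : A.e - f - g ∈ A.pos := by
      have := hgef; unfold AOU.Le at this; simpa [sub_sub] using this
    exact A.smul_mem hN0 this
  have hkey : N • A.e - (1 + N) • g ∈ A.pos := by
    have := A.add_mem h1 h2
    have heq : N • f - g + N • (A.e - f - g) = N • A.e - (1 + N) • g := by
      simp [smul_sub, add_smul, one_smul]; abel
    rwa [heq] at this
  set t : ℝ := N / (1 + N) with ht
  have ht0 : 0 ≤ t := div_nonneg hN0 (le_of_lt hpos1)
  have htS : t ∈ S := by
    refine ⟨ht0, ?_, ?_⟩
    · show g - -(t • A.e) ∈ A.pos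
      have := A.add_mem hg (A.smul_mem ht0 A.e_mem)
      simpa [sub_neg_eq_add, add_comm] using this
    · show t • A.e - g ∈ A.pos
      have := A.smul_mem (le_of_lt (inv_pos.mpr hpos1)) hkey
      have heq : (1 + N)⁻¹ • (N • A.e - (1 + N) • g) = t • A.e - g := by
        rw [smul_sub, smul_smul, smul_smul, inv_mul_cancel₀ (ne_of_gt hpos1), one_smul]
        rw [ht, div_eq_inv_mul]
      rwa [heq] at this
  have hle : N ≤ t := csInf_le hbdd htS
  have hN : N = 0 := by
    have h := (le_div_iff₀ hpos1).mp hle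
    nlinarith
  have hg0 : -g ∈ A.pos := by
    have := hcond g hg hgf
    rw [← hNdef, hN] at this
    unfold AOU.Le at this
    simpa using this
  exact A.pointed hg hg0
end

section
/- Let F be an orthogonal projection on a finite-dimensional complex Hilbert space and φ a positive linear map on self-adjoint operators with φ(1) = F and φ(G) = G for all 0 ≤ G ≤ F. Then φ(X) = F X F for all self-adjoint X, i.e., the coherent Lüders rule in quantum mechanics is unique. -/
/-!
Write `F⊥ = 1 - F` and split an effect `0 ≤ G ≤ 1` into the blocks `F G F`, `F⊥ G F⊥` and the
off-diagonal part `F G F⊥ + F⊥ G F`. The block `F G F` lies below `F`, so `φ` fixes it; the block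
`F⊥ G F⊥` lies below `F⊥`, which `φ` kills because `φ F⊥ = φ 1 - φ F = F - F`. Hence
`φ ((F + t F⊥) G (F + t F⊥)) = F G F + t φ (F G F⊥ + F⊥ G F)` is positive for every real `t`,
which forces `φ (F G F⊥ + F⊥ G F) = 0`. Finally, every self-adjoint element is a real combination
of effects.
-/

open scoped ComplexOrder

section StarOrderedRing

variable {R : Type*} [Ring R] [StarRing R] [PartialOrder R] [StarOrderedRing R]

lemma IsStarProjection.conjugate_le_self {p a : R} (hp : IsStarProjection p) (ha : a ≤ 1) :
    p * a * p ≤ p := by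
  simpa [hp.isIdempotentElem.eq] using hp.isSelfAdjoint.conjugate_le_conjugate ha

end StarOrderedRing

namespace PositiveLinearMap

lemma map_eq_zero_of_le_one_sub {R A : Type*} [Semiring R] [Ring A] [PartialOrder A]
    [Module R A] {φ : A →ₚ[R] A} {F : A} (hone : φ 1 = F) (hF : φ F = F)
    {a : A} (ha₀ : 0 ≤ a) (ha : a ≤ 1 - F) : φ a = 0 :=
  le_antisymm (by simpa [hone, hF] using φ.monotone ha) (φ.map_nonneg ha₀)

variable {R A : Type*} [Semiring R] [Ring A] [StarRing A] [PartialOrder A] [StarOrderedRing A]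
  [Module R A] {F : A} {φ : A →ₚ[R] A}

lemma map_conjugate_eq_self (hF : IsStarProjection F)
    (hfix : ∀ G, 0 ≤ G → G ≤ F → φ G = G) {G : A} (hG₀ : 0 ≤ G) (hG₁ : G ≤ 1) :
    φ (F * G * F) = F * G * F :=
  hfix _ (hF.isSelfAdjoint.conjugate_nonneg hG₀) (hF.conjugate_le_self hG₁)

lemma map_conjugate_one_sub_eq_zero (hF : IsStarProjection F) (hone : φ 1 = F)
    (hfix : ∀ G, 0 ≤ G → G ≤ F → φ G = G) {G : A} (hG₀ : 0 ≤ G) (hG₁ : G ≤ 1) :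
    φ ((1 - F) * G * (1 - F)) = 0 :=
  φ.map_eq_zero_of_le_one_sub hone (hfix F hF.nonneg le_rfl)
    (hF.one_sub.isSelfAdjoint.conjugate_nonneg hG₀) (hF.one_sub.conjugate_le_self hG₁)

end PositiveLinearMap

section CStarAlgebra

variable {A : Type*} [CStarAlgebra A] [PartialOrder A] [StarOrderedRing A]

open Filter Topology in
lemma nonneg_of_forall_nonneg_add_smul {P C : A} (h : ∀ t : ℝ, 0 < t → 0 ≤ P + t • C) :
    0 ≤ C := by
  have hlim : Tendsto (fun t : ℝ => t⁻¹ • P + C) atTop (𝓝 C) := by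
    simpa using ((tendsto_inv_atTop_zero (𝕜 := ℝ)).smul_const P).add_const C
  refine ge_of_tendsto hlim (eventually_gt_atTop 0 |>.mono fun t ht => ?_)
  have := smul_nonneg (inv_nonneg.mpr ht.le) (h t ht)
  rwa [smul_add, smul_smul, inv_mul_cancel₀ ht.ne', one_smul] at this

lemma eq_zero_of_forall_nonneg_add_smul {P C : A} (h : ∀ t : ℝ, 0 ≤ P + t • C) : C = 0 :=
  le_antisymm
    (neg_nonneg.mp <| nonneg_of_forall_nonneg_add_smul fun t _ => by simpa using h (-t))
    (nonneg_of_forall_nonneg_add_smul fun t _ => h t)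

lemma IsSelfAdjoint.exists_eq_smul_sub_smul_one_sub {X : A} (hX : IsSelfAdjoint X) :
    ∃ c : ℝ, ∃ E : A, 0 ≤ E ∧ E ≤ 1 ∧ X = c • E - c • (1 - E) := by
  set c : ℝ := ‖X‖ + 1
  have hc : (2 * c)⁻¹ * c = 2⁻¹ := by
    have : c ≠ 0 := by positivity
    field_simp
  have hnorm : algebraMap ℝ A ‖X‖ ≤ c • 1 := by
    rw [Algebra.algebraMap_eq_smul_one]
    exact smul_le_smul_of_nonneg_right (by linarith) zero_le_one
  refine ⟨c, (2 * c)⁻¹ • (X + c • 1), smul_nonneg (by positivity) ?_, ?_, ?_⟩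
  · exact neg_le_iff_add_nonneg.mp ((neg_le_neg hnorm).trans hX.neg_algebraMap_norm_le_self)
  · have h1E : 1 - (2 * c)⁻¹ • (X + c • 1) = (2 * c)⁻¹ • (c • 1 - X) := by
      simp only [smul_add, smul_sub, smul_smul, hc]
      module
    rw [← sub_nonneg, h1E]
    exact smul_nonneg (by positivity) (sub_nonneg.mpr (hX.le_algebraMap_norm_self.trans hnorm))
  · simp only [smul_add, smul_sub, smul_smul, mul_comm c, hc]
    module

namespace PositiveLinearMap

variable {F : A} {φ : A →ₚ[ℝ] A}

lemma map_offDiagonal_eq_zero (hF : IsStarProjection F) (hone : φ 1 = F)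
    (hfix : ∀ G, 0 ≤ G → G ≤ F → φ G = G) {G : A} (hG₀ : 0 ≤ G) (hG₁ : G ≤ 1) :
    φ (F * G * (1 - F) + (1 - F) * G * F) = 0 := by
  refine eq_zero_of_forall_nonneg_add_smul (P := F * G * F) fun t => ?_
  have hM : IsSelfAdjoint (F + t • (1 - F)) :=
    hF.isSelfAdjoint.add ((IsSelfAdjoint.all t).smul hF.one_sub.isSelfAdjoint)
  have hexpand : (F + t • (1 - F)) * G * (F + t • (1 - F)) = F * G * F
      + t • (F * G * (1 - F) + (1 - F) * G * F) + (t ^ 2) • ((1 - F) * G * (1 - F)) := by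
    simp only [add_mul, mul_add, smul_mul_assoc, mul_smul_comm, smul_add, smul_smul]
    module
  have := φ.map_nonneg (hM.conjugate_nonneg hG₀)
  rwa [hexpand, map_add, map_add, map_smul, map_smul, map_conjugate_eq_self hF hfix hG₀ hG₁,
    map_conjugate_one_sub_eq_zero hF hone hfix hG₀ hG₁, smul_zero, add_zero] at this

theorem map_eq_conjugate_of_nonneg_of_le_one (hF : IsStarProjection F) (hone : φ 1 = F)
    (hfix : ∀ G, 0 ≤ G → G ≤ F → φ G = G) {G : A} (hG₀ : 0 ≤ G) (hG₁ : G ≤ 1) :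
    φ G = F * G * F := by
  have hsplit : G = F * G * F + (F * G * (1 - F) + (1 - F) * G * F)
      + (1 - F) * G * (1 - F) := by
    noncomm_ring
  nth_rw 1 [hsplit]
  rw [map_add, map_add, map_conjugate_eq_self hF hfix hG₀ hG₁,
    map_offDiagonal_eq_zero hF hone hfix hG₀ hG₁,
    map_conjugate_one_sub_eq_zero hF hone hfix hG₀ hG₁, add_zero, add_zero]

theorem map_eq_conjugate_of_isSelfAdjoint (hF : IsStarProjection F) (hone : φ 1 = F)
    (hfix : ∀ G, 0 ≤ G → G ≤ F → φ G = G) {X : A} (hX : IsSelfAdjoint X) :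
    φ X = F * X * F := by
  obtain ⟨c, E, hE₀, hE₁, rfl⟩ := hX.exists_eq_smul_sub_smul_one_sub
  rw [map_sub, map_smul, map_smul, map_eq_conjugate_of_nonneg_of_le_one hF hone hfix hE₀ hE₁,
    map_eq_conjugate_of_nonneg_of_le_one hF hone hfix (sub_nonneg.mpr hE₁) (sub_le_self 1 hE₀)]
  simp only [mul_sub, sub_mul, mul_smul_comm, smul_mul_assoc]

end PositiveLinearMap

end CStarAlgebra

theorem clr_unique_quantum {n : ℕ} (F : Matrix (Fin n) (Fin n) ℂ)
    (hFh : F.IsHermitian) (hFproj : F * F = F)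
    (φ : Matrix (Fin n) (Fin n) ℂ →ₗ[ℝ] Matrix (Fin n) (Fin n) ℂ)
    (hpos : ∀ X : Matrix (Fin n) (Fin n) ℂ, X.PosSemidef → (φ X).PosSemidef)
    (hone : φ 1 = F)
    (hcoh : ∀ G : Matrix (Fin n) (Fin n) ℂ, G.PosSemidef → (F - G).PosSemidef → φ G = G) :
    ∀ X : Matrix (Fin n) (Fin n) ℂ, X.IsHermitian → φ X = F * X * F := by
  open scoped MatrixOrder Matrix.Norms.L2Operator in
  refine fun X hX => PositiveLinearMap.map_eq_conjugate_of_isSelfAdjoint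
    (φ := .mk₀ φ fun Y hY => (hpos Y (Matrix.nonneg_iff_posSemidef.mp hY)).nonneg)
    ⟨hFproj, hFh⟩ hone ?_ hX.isSelfAdjoint
  exact fun G hG₀ hGF => hcoh G (Matrix.nonneg_iff_posSemidef.mp hG₀) hGF
end

section
/- In the dichotomic norm cone on ℝ × ℝ^d, if a nonzero effect f ≠ e admits a coherent f-compatible map, then f lies on an extremal ray with ‖f‖ = 1, i.e., f = (1/2, x) with ‖x‖ = 1/2. -/
/-- The cone of the dichotomic norm cone built from a norm `N` on `ℝ^d`. -/
def dpos {d : ℕ} (N : (Fin d → ℝ) → ℝ) : Set (ℝ × (Fin d → ℝ)) := {v | N v.2 ≤ v.1}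

/-- The order unit `e = (1, 0)`. -/
def de (d : ℕ) : ℝ × (Fin d → ℝ) := (1, 0)

/-- Cone order: `x ≤ y` iff `y - x` is in the cone. -/
def dLe {d : ℕ} (N : (Fin d → ℝ) → ℝ) (x y : ℝ × (Fin d → ℝ)) : Prop := y - x ∈ dpos N

/-- The order norm of the dichotomic norm cone. -/
noncomputable def donorm {d : ℕ} (N : (Fin d → ℝ) → ℝ) (v : ℝ × (Fin d → ℝ)) : ℝ :=
  sInf {r : ℝ | 0 ≤ r ∧ dLe N (-(r • de d)) v ∧ dLe N v (r • de d)}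

/-- `N` is a norm on `ℝ^d`. -/
def IsNorm {d : ℕ} (N : (Fin d → ℝ) → ℝ) : Prop :=
  (∀ x, 0 ≤ N x) ∧ (∀ x, N x = 0 → x = 0) ∧
  (∀ (r : ℝ) (x), N (r • x) = |r| * N x) ∧ (∀ x y, N (x + y) ≤ N x + N y)
theorem dichotomic_clr_extremal {d : ℕ} (N : (Fin d → ℝ) → ℝ) (hN : IsNorm N)
    (f : ℝ × (Fin d → ℝ)) (hf : f ∈ dpos N) (hfe : dLe N f (de d))
    (hf0 : f ≠ 0) (hfne : f ≠ de d)
    (φ : (ℝ × (Fin d → ℝ)) →ₗ[ℝ] (ℝ × (Fin d → ℝ)))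
    (hpos : ∀ v ∈ dpos N, φ v ∈ dpos N) (hφe : φ (de d) = f)
    (hcoh : ∀ g ∈ dpos N, dLe N g f → φ g = g) :
    f.1 = 1/2 ∧ N f.2 = 1/2 := by
  obtain ⟨hN0, hNz, hNh, hNa⟩ := hN
  have hN00 : N 0 = 0 := by
    have h := hNh 0 0
    simpa using h
  have hNneg : ∀ y, N (-y) = N y := by
    intro y
    have h := hNh (-1) y
    simpa using h
  have hf' : N f.2 ≤ f.1 := hf
  have hfe' : N f.2 ≤ 1 - f.1 := by
    have h : N ((de d).2 - f.2) ≤ (de d).1 - f.1 := hfe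
    simp only [de] at h
    rw [show (1, (0 : Fin d → ℝ)).2 - f.2 = -f.2 by simp, hNneg] at h
    simpa using h
  have ht0 : 0 < f.1 := by
    rcases lt_or_eq_of_le (le_trans (hN0 f.2) hf') with h | h
    · exact h
    · exfalso
      apply hf0
      have hx0 : f.2 = 0 := hNz f.2 (le_antisymm (by rw [h]; exact hf') (hN0 f.2))
      exact Prod.ext h.symm hx0
  have hφf : φ f = f := by
    apply hcoh f hf
    simp [dLe, dpos, hN00]
  -- the element g = (f.1 + N f.2) • e - f is positive
  set r : ℝ := f.1 + N f.2 with hr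
  have hg : r • de d - f ∈ dpos N := by
    simp only [dpos, de, Set.mem_setOf_eq, Prod.smul_mk, Prod.fst_sub, Prod.snd_sub,
      smul_eq_mul, mul_one, smul_zero]
    rw [show (0 : Fin d → ℝ) - f.2 = -f.2 by simp, hNneg]
    linarith
  have hφg := hpos _ hg
  rw [map_sub, map_smul, hφe, hφf] at hφg
  have hφg' : N ((r - 1) • f.2) ≤ (r - 1) * f.1 := by
    have h1 : (r • f - f).2 = (r - 1) • f.2 := by
      simp [sub_smul]
    have h2 : (r • f - f).1 = (r - 1) * f.1 := by
      simp [sub_mul]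
    simpa [dpos, h1, h2] using hφg
  rw [hNh] at hφg'
  have hc : 0 ≤ r - 1 := by
    by_contra h
    push_neg at h
    have h1 : (r - 1) * f.1 < 0 := mul_neg_of_neg_of_pos (by linarith) ht0
    have h2 : 0 ≤ |r - 1| * N f.2 := mul_nonneg (abs_nonneg _) (hN0 _)
    linarith
  have hNx : N f.2 = 1 - f.1 := le_antisymm hfe' (by simp only [hr] at hc; linarith)
  have hts : 0 ≤ 2 * f.1 - 1 := by
    have := hf'
    rw [hNx] at this
    linarith
  -- the element s • e with s = 2 f.1 - 1 satisfies 0 ≤ s e ≤ f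
  set s : ℝ := 2 * f.1 - 1 with hsdef
  have hg2 : s • de d ∈ dpos N := by
    simp only [dpos, de, Set.mem_setOf_eq, Prod.smul_mk, smul_eq_mul, mul_one, smul_zero]
    rw [hN00]
    linarith
  have hle2 : dLe N (s • de d) f := by
    simp only [dLe, dpos, de, Set.mem_setOf_eq, Prod.smul_mk, Prod.fst_sub, Prod.snd_sub,
      smul_eq_mul, mul_one, smul_zero]
    rw [show f.2 - (0 : Fin d → ℝ) = f.2 by simp, hNx]
    linarith
  have hkey : s • f = s • de d := by
    have h := hcoh _ hg2 hle2
    rw [map_smul, hφe] at h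
    exact h
  have hs0 : s = 0 := by
    by_contra h
    apply hfne
    have := smul_right_injective (ℝ × (Fin d → ℝ)) h hkey
    exact this
  constructor
  · simp only [hsdef] at hs0; linarith
  · rw [hNx]
    simp only [hsdef] at hs0
    linarith
end
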